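/- arXiv:2003.12613 — 6 statements merged into one kernel-verified Lean document; each statement's English description precedes it below -/
import Mathlib

section
/- Let S and A be finite nonempty sets, γ ∈ [0,1), Δ ≥ 0, and let (s_t, a_t, s'_t, r_t)_{t∈ℕ} be an arbitrary trajectory with s_t, s'_t ∈ S, a_t ∈ A, r_t ∈ ℝ, let α_t ∈ [0,1] be learning rates, and let δ_t ∈ ℝ satisfy |δ_t| ≤ Δ for all t. Define three sequences of Q-tables Q_t, Q_t^+, Q_t^- : S × A → ℝ, all starting from the same initial table Q_0, where at each step t only the entry (s_t,a_t) is updated: Q_{t+1}(s_t,a_t) = (1-α_t)Q_t(s_t,a_t) + α_t(r_t + δ_t + γ max_{a'∈A} Q_t(s'_t,a')), with Q^+ using δ_t replaced by Δ and Q^- using δ_t replaced by -Δ, and all other entries unchanged. Then for every t ∈ ℕ and every (s,a) ∈ S × A, Q_t^-(s,a) ≤ Q_t(s,a) ≤ Q_t^+(s,a). -/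
/-!
For `α ∈ [0, 1]` and `γ ≥ 0` a single Q-learning update is monotone in the current table and in
the reward, the bootstrapped target entering through the monotone `qmax`. Induction on `t` then
shows that feeding larger rewards along the same trajectory yields pointwise larger Q-tables,
and `r t - Δ ≤ r t + δ t ≤ r t + Δ`.
-/

/-- The maximum of a real-valued function over a finite nonempty action space. -/
noncomputable def qmax {A : Type*} [Fintype A] [Nonempty A] (f : A → ℝ) : ℝ :=
  Finset.univ.sup' Finset.univ_nonempty f

theorem qmax_mono {A : Type*} [Fintype A] [Nonempty A] : Monotone (qmax : (A → ℝ) → ℝ) :=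
  fun _ _ h => Finset.sup'_mono_fun fun b _ => h b

theorem q_backup_le_q_backup {α γ q₁ q₂ ρ₁ ρ₂ v₁ v₂ : ℝ} (hα0 : 0 ≤ α) (hα1 : α ≤ 1)
    (hγ : 0 ≤ γ) (hq : q₁ ≤ q₂) (hρ : ρ₁ ≤ ρ₂) (hv : v₁ ≤ v₂) :
    (1 - α) * q₁ + α * (ρ₁ + γ * v₁) ≤ (1 - α) * q₂ + α * (ρ₂ + γ * v₂) := by
  have : 0 ≤ 1 - α := sub_nonneg.mpr hα1
  gcongr

structure IsQLearning {S A : Type*} [Fintype A] [Nonempty A] (γ : ℝ)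
    (s : ℕ → S) (a : ℕ → A) (s' : ℕ → S) (α ρ : ℕ → ℝ) (Q : ℕ → S → A → ℝ) : Prop where
  update : ∀ t, Q (t + 1) (s t) (a t) =
    (1 - α t) * Q t (s t) (a t) + α t * (ρ t + γ * qmax (Q t (s' t)))
  update_of_ne : ∀ t x b, (x, b) ≠ (s t, a t) → Q (t + 1) x b = Q t x b

theorem IsQLearning.le_of_reward_le {S A : Type*} [Fintype A] [Nonempty A] {γ : ℝ}
    {s : ℕ → S} {a : ℕ → A} {s' : ℕ → S} {α ρ₁ ρ₂ : ℕ → ℝ} {Q₁ Q₂ : ℕ → S → A → ℝ}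
    (h₁ : IsQLearning γ s a s' α ρ₁ Q₁) (h₂ : IsQLearning γ s a s' α ρ₂ Q₂) (hγ : 0 ≤ γ)
    (hα0 : ∀ t, 0 ≤ α t) (hα1 : ∀ t, α t ≤ 1) (hρ : ∀ t, ρ₁ t ≤ ρ₂ t) (h0 : Q₁ 0 ≤ Q₂ 0) :
    ∀ t, Q₁ t ≤ Q₂ t := by
  intro t
  induction t with
  | zero => exact h0
  | succ t ih =>
    intro x b
    by_cases hxb : (x, b) = (s t, a t)
    · obtain ⟨rfl, rfl⟩ := Prod.mk.inj hxb
      rw [h₁.update, h₂.update]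
      exact q_backup_le_q_backup (hα0 t) (hα1 t) hγ (ih _ _) (hρ t) (qmax_mono (ih _))
    · rw [h₁.update_of_ne t x b hxb, h₂.update_of_ne t x b hxb]
      exact ih x b

theorem poisoned_q_learning_sandwich_general
    {S A : Type*} [Fintype A] [Nonempty A]
    (γ Δ : ℝ) (hγ0 : 0 ≤ γ)
    (s : ℕ → S) (a : ℕ → A) (s' : ℕ → S) (r : ℕ → ℝ)
    (α : ℕ → ℝ) (hα0 : ∀ t, 0 ≤ α t) (hα1 : ∀ t, α t ≤ 1)
    (δ : ℕ → ℝ) (hδ : ∀ t, |δ t| ≤ Δ)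
    (Q Qp Qm : ℕ → S → A → ℝ)
    (hinitp : Q 0 = Qp 0) (hinitm : Q 0 = Qm 0)
    (hQ : ∀ t, Q (t + 1) (s t) (a t) =
      (1 - α t) * Q t (s t) (a t) + α t * (r t + δ t + γ * qmax (Q t (s' t))))
    (hQoff : ∀ t x b, (x, b) ≠ (s t, a t) → Q (t + 1) x b = Q t x b)
    (hQp : ∀ t, Qp (t + 1) (s t) (a t) =
      (1 - α t) * Qp t (s t) (a t) + α t * (r t + Δ + γ * qmax (Qp t (s' t))))
    (hQpoff : ∀ t x b, (x, b) ≠ (s t, a t) → Qp (t + 1) x b = Qp t x b)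
    (hQm : ∀ t, Qm (t + 1) (s t) (a t) =
      (1 - α t) * Qm t (s t) (a t) + α t * (r t + -Δ + γ * qmax (Qm t (s' t))))
    (hQmoff : ∀ t x b, (x, b) ≠ (s t, a t) → Qm (t + 1) x b = Qm t x b) :
    ∀ t x b, Qm t x b ≤ Q t x b ∧ Q t x b ≤ Qp t x b := by
  have hpoisoned : IsQLearning γ s a s' α (fun t => r t + δ t) Q := ⟨hQ, hQoff⟩
  have hupper : IsQLearning γ s a s' α (fun t => r t + Δ) Qp := ⟨hQp, hQpoff⟩
  have hlower : IsQLearning γ s a s' α (fun t => r t + -Δ) Qm := ⟨hQm, hQmoff⟩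
  intro t x b
  constructor
  · refine hlower.le_of_reward_le hpoisoned hγ0 hα0 hα1 (fun t => ?_) hinitm.ge t x b
    simpa using (abs_le.mp (hδ t)).1
  · refine hpoisoned.le_of_reward_le hupper hγ0 hα0 hα1 (fun t => ?_) hinitp.le t x b
    simpa using (abs_le.mp (hδ t)).2

/-- Domination lemma: a reward-poisoned Q-learning trajectory with perturbations
bounded by `Δ` is sandwiched between the trajectories fed rewards `r t - Δ` and `r t + Δ`. -/
theorem poisoned_q_learning_sandwich
    {S A : Type*} [Fintype S] [Nonempty S] [Fintype A] [Nonempty A]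
    (γ Δ : ℝ) (hγ0 : 0 ≤ γ) (hγ1 : γ < 1) (hΔ : 0 ≤ Δ)
    (s : ℕ → S) (a : ℕ → A) (s' : ℕ → S) (r : ℕ → ℝ)
    (α : ℕ → ℝ) (hα0 : ∀ t, 0 ≤ α t) (hα1 : ∀ t, α t ≤ 1)
    (δ : ℕ → ℝ) (hδ : ∀ t, |δ t| ≤ Δ)
    (Q Qp Qm : ℕ → S → A → ℝ)
    (hinitp : Q 0 = Qp 0) (hinitm : Q 0 = Qm 0)
    (hQ : ∀ t, Q (t + 1) (s t) (a t) =
      (1 - α t) * Q t (s t) (a t) + α t * (r t + δ t + γ * qmax (Q t (s' t))))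
    (hQoff : ∀ t x b, (x, b) ≠ (s t, a t) → Q (t + 1) x b = Q t x b)
    (hQp : ∀ t, Qp (t + 1) (s t) (a t) =
      (1 - α t) * Qp t (s t) (a t) + α t * (r t + Δ + γ * qmax (Qp t (s' t))))
    (hQpoff : ∀ t x b, (x, b) ≠ (s t, a t) → Qp (t + 1) x b = Qp t x b)
    (hQm : ∀ t, Qm (t + 1) (s t) (a t) =
      (1 - α t) * Qm t (s t) (a t) + α t * (r t + -Δ + γ * qmax (Qm t (s' t))))
    (hQmoff : ∀ t x b, (x, b) ≠ (s t, a t) → Qm (t + 1) x b = Qm t x b) :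
    ∀ t x b, Qm t x b ≤ Q t x b ∧ Q t x b ≤ Qp t x b :=
  poisoned_q_learning_sandwich_general γ Δ hγ0 s a s' r α hα0 hα1 δ hδ Q Qp Qm hinitp hinitm hQ
    hQoff hQp hQpoff hQm hQmoff
end

section
/- Let S and A be finite nonempty sets with |A| ≥ 2, γ ∈ [0,1), and let Q* : S × A → ℝ and π* : S → A satisfy Q*(s,π*(s)) > Q*(s,a) for every s ∈ S and every a ≠ π*(s) (π* is the unique greedy policy of Q*). Define Δ₁ = (1-γ)·min_{s∈S}[Q*(s,π*(s)) - max_{a≠π*(s)} Q*(s,a)]/2. If 0 ≤ Δ < Δ₁ and Q : S × A → ℝ satisfies |Q(s,a) - Q*(s,a)| ≤ Δ/(1-γ) for all (s,a), then for every s ∈ S and every a ≠ π*(s), Q(s,π*(s)) > Q(s,a); i.e., the greedy policy of Q equals π*. -/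
/-!
An entrywise perturbation of size `ε` moves every difference `Q(s,π*(s)) - Q(s,a)` by at most
`2ε`, so the greedy action survives as long as `2ε` is below the action gap of `Q*` at `s`.
With `ε = Δ/(1-γ)`, the hypothesis `Δ < Δ₁` says exactly that at every state.
-/

noncomputable def actionGap {A : Type*} (f : A → ℝ) (b : A) : ℝ :=
  f b - sSup (f '' {a | a ≠ b})

lemma le_sub_actionGap {A : Type*} [Finite A] (f : A → ℝ) {a b : A} (hab : a ≠ b) :
    f a ≤ f b - actionGap f b := by
  have hbdd : BddAbove (f '' {a | a ≠ b}) := (Set.toFinite _).bddAbove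
  simpa [actionGap] using le_csSup hbdd ⟨a, hab, rfl⟩

lemma lt_of_abs_sub_le_of_two_mul_lt {x y x' y' ε : ℝ} (hx : |x - x'| ≤ ε)
    (hy : |y - y'| ≤ ε) (h : 2 * ε < y' - x') : x < y := by
  linarith [(abs_le.mp hx).2, (abs_le.mp hy).1]

lemma lt_of_abs_sub_le_of_two_mul_lt_actionGap {A : Type*} [Finite A] {f g : A → ℝ} {ε : ℝ}
    (hg : ∀ a, |g a - f a| ≤ ε) {b : A} (hgap : 2 * ε < actionGap f b) :
    ∀ a ≠ b, g a < g b := fun a hab =>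
  lt_of_abs_sub_le_of_two_mul_lt (hg a) (hg b) (by linarith [le_sub_actionGap f hab])

theorem strong_infeasibility_certificate_general
    {S A : Type*} [Fintype S] [Nonempty S] [Fintype A]
    (γ : ℝ) (hγ1 : γ < 1)
    (Qstar : S → A → ℝ) (πstar : S → A)
    (Δ : ℝ)
    (hΔ1 : Δ < (1 - γ) * Finset.univ.inf' Finset.univ_nonempty
      (fun s => Qstar s (πstar s) - sSup (Qstar s '' {a | a ≠ πstar s})) / 2)
    (Q : S → A → ℝ) (hQ : ∀ s a, |Q s a - Qstar s a| ≤ Δ / (1 - γ)) :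
    ∀ s, ∀ a ≠ πstar s, Q s a < Q s (πstar s) := by
  intro s
  have hγ : 0 < 1 - γ := by linarith
  change Δ < (1 - γ) * Finset.univ.inf' _ (fun s => actionGap (Qstar s) (πstar s)) / 2 at hΔ1
  have hgap_le := mul_le_mul_of_nonneg_left
    (Finset.univ.inf'_le (fun s => actionGap (Qstar s) (πstar s)) (Finset.mem_univ s)) hγ.le
  have hΔ : Δ / (1 - γ) < actionGap (Qstar s) (πstar s) / 2 := by
    rw [div_lt_iff₀' hγ]
    linarith
  exact lt_of_abs_sub_le_of_two_mul_lt_actionGap (hQ s) (by linarith)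

/-- Strong infeasibility certificate (deterministic core of Corollary 1):
if `Δ < Δ₁` and `Q` is within `Δ/(1-γ)` of `Q*` in every entry, then the greedy
policy of `Q` equals the optimal policy `π*`. -/
theorem strong_infeasibility_certificate
    {S A : Type*} [Fintype S] [Nonempty S] [Fintype A] [Nonempty A]
    (hA : 2 ≤ Fintype.card A)
    (γ : ℝ) (hγ0 : 0 ≤ γ) (hγ1 : γ < 1)
    (Qstar : S → A → ℝ) (πstar : S → A)
    (hgreedy : ∀ s, ∀ a ≠ πstar s, Qstar s a < Qstar s (πstar s))
    (Δ : ℝ) (hΔ0 : 0 ≤ Δ)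
    (hΔ1 : Δ < (1 - γ) * Finset.univ.inf' Finset.univ_nonempty
      (fun s => Qstar s (πstar s) - sSup (Qstar s '' {a | a ≠ πstar s})) / 2)
    (Q : S → A → ℝ) (hQ : ∀ s a, |Q s a - Qstar s a| ≤ Δ / (1 - γ)) :
    ∀ s, ∀ a ≠ πstar s, Q s a < Q s (πstar s) :=
  strong_infeasibility_certificate_general γ hγ1 Qstar πstar Δ hΔ1 Q hQ
end

section
/- Let S and A be finite nonempty sets, γ ∈ [0,1), and let Q* : S × A → ℝ and π* : S → A satisfy Q*(s,π*(s)) > Q*(s,a) for every s ∈ S and every a ≠ π*(s). Let π† : S → 𝒫(A) be a target partial policy with π†(s) nonempty for all s, and let S† = {s ∈ S : π†(s) ≠ A}. Define Δ₂ = (1-γ)·max_{s∈S}[Q*(s,π*(s)) - max_{a∈π†(s)} Q*(s,a)]/2. If 0 ≤ Δ < Δ₂ and Q : S × A → ℝ satisfies |Q(s,a) - Q*(s,a)| ≤ Δ/(1-γ) for all (s,a), then there exists a state s ∈ S† and an action a ∉ π†(s) such that Q(s,a) > Q(s,a') for all a' ∈ π†(s); i.e., the greedy policy of Q disagrees with π†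 on some target state. -/
/-!
The bound on `Δ` says that at some state `s` the gap `Q*(s, π*(s)) - sup_{a ∈ π†(s)} Q*(s, a)`
exceeds twice the uniform error `Δ / (1 - γ)`. An entrywise perturbation smaller than half a gap
cannot reverse it, so under `Q` the action `π*(s)` still beats every action of `π†(s)`; in
particular it lies outside `π†(s)`.
-/

lemma lt_of_abs_sub_le_of_add_two_mul_lt {ι : Type*} {f g : ι → ℝ} {ε : ℝ}
    (hfg : ∀ i, |f i - g i| ≤ ε) {i j : ι} (hij : g i + 2 * ε < g j) : f i < f j := by
  have hi := abs_le.mp (hfg i)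
  have hj := abs_le.mp (hfg j)
  linarith [hi.2, hj.1]

lemma notMem_and_forall_lt_of_sSup_add_two_mul_lt {A : Type*} {f g : A → ℝ} {ε : ℝ}
    (hfg : ∀ a, |f a - g a| ≤ ε) {T : Set A} (hT : BddAbove (g '' T)) {a : A}
    (ha : sSup (g '' T) + 2 * ε < g a) : a ∉ T ∧ ∀ a' ∈ T, f a' < f a := by
  have hlt : ∀ a' ∈ T, f a' < f a := fun a' ha' =>
    lt_of_abs_sub_le_of_add_two_mul_lt hfg <|
      (add_le_add_left (le_csSup hT (Set.mem_image_of_mem g ha')) _).trans_lt ha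
  exact ⟨fun haT => (hlt a haT).false, hlt⟩

theorem weak_infeasibility_certificate_general
    {S A : Type*} [Fintype S] [Nonempty S] [Fintype A]
    (γ : ℝ) (hγ1 : γ < 1)
    (Qstar : S → A → ℝ) (πstar : S → A)
    (πdag : S → Set A)
    (Δ : ℝ)
    (hΔ2 : Δ < (1 - γ) * Finset.univ.sup' Finset.univ_nonempty
      (fun s => Qstar s (πstar s) - sSup (Qstar s '' πdag s)) / 2)
    (Q : S → A → ℝ) (hQ : ∀ s a, |Q s a - Qstar s a| ≤ Δ / (1 - γ)) :
    ∃ s, πdag s ≠ Set.univ ∧ ∃ a ∉ πdag s, ∀ a' ∈ πdag s, Q s a' < Q s a := by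
  have hgap : 2 * (Δ / (1 - γ)) < Finset.univ.sup' Finset.univ_nonempty
      (fun s => Qstar s (πstar s) - sSup (Qstar s '' πdag s)) := by
    rw [← mul_div_assoc, div_lt_iff₀ (sub_pos.mpr hγ1)]
    linarith
  obtain ⟨s, -, hs⟩ := (Finset.lt_sup'_iff _).mp hgap
  obtain ⟨hnotMem, hlt⟩ := notMem_and_forall_lt_of_sSup_add_two_mul_lt (hQ s)
    (Set.toFinite _).bddAbove (lt_sub_iff_add_lt'.mp hs)
  exact ⟨s, fun huniv => hnotMem (huniv ▸ Set.mem_univ _), πstar s, hnotMem, hlt⟩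

/-- Weak infeasibility certificate (deterministic core of Corollary 2):
if `Δ < Δ₂` and `Q` is within `Δ/(1-γ)` of `Q*` in every entry, then the greedy
policy of `Q` disagrees with the target partial policy `π†` on some target state. -/
theorem weak_infeasibility_certificate
    {S A : Type*} [Fintype S] [Nonempty S] [Fintype A] [Nonempty A]
    (γ : ℝ) (hγ0 : 0 ≤ γ) (hγ1 : γ < 1)
    (Qstar : S → A → ℝ) (πstar : S → A)
    (hgreedy : ∀ s, ∀ a ≠ πstar s, Qstar s a < Qstar s (πstar s))
    (πdag : S → Set A) (hπdag : ∀ s, (πdag s).Nonempty)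
    (Δ : ℝ) (hΔ0 : 0 ≤ Δ)
    (hΔ2 : Δ < (1 - γ) * Finset.univ.sup' Finset.univ_nonempty
      (fun s => Qstar s (πstar s) - sSup (Qstar s '' πdag s)) / 2)
    (Q : S → A → ℝ) (hQ : ∀ s a, |Q s a - Qstar s a| ≤ Δ / (1 - γ)) :
    ∃ s, πdag s ≠ Set.univ ∧ ∃ a ∉ πdag s, ∀ a' ∈ πdag s, Q s a' < Q s a :=
  weak_infeasibility_certificate_general γ hγ1 Qstar πstar πdag Δ hΔ2 Q hQ
end

section
/- Let S and A be finite nonempty sets, γ ≥ 0, Q* : S × A → ℝ, and let π† : S → 𝒫(A) be a target partial policy such that for every s in S† = {s : π†(s) ≠ A}, both π†(s) and its complement A∖π†(s) are nonempty. Define Δ₃ = (1+γ)/2 · max_{s∈S†}[max_{a∉π†(s)} Q*(s,a) - max_{a∈π†(s)} Q*(s,a)]₊, where [x]₊ = max(x,0). Suppose Δ > Δ₃ and define Q' : S × A → ℝ by Q'(s,a) = Q*(s,a) + Δ/(1+γ) if s ∈ S† and a ∈ π†(s); Q'(s,a) = Q*(s,a) - Δ/(1+γ) if s ∈ S† and a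 ∉ π†(s); and Q'(s,a) = Q*(s,a) if s ∉ S†. Then for every s ∈ S†, max_{a∈π†(s)} Q'(s,a) > max_{a∉π†(s)} Q'(s,a); i.e., Q' lies in the target Q-table set 𝒬†. -/
/-! Shifting every desired action of a target state up by `c = Δ/(1+γ)` and every
undesired one down by `c` raises the gap `max_{π†} Q - max_{A∖π†} Q` by exactly `2c`.
Since `Δ > Δ₃`, each positive part of the original gap is below `2Δ/(1+γ) = 2c`,
so the new gap is positive. -/

lemma csSup_image_eq_add_of_eqOn {α : Type*} {T : Set α} {f g : α → ℝ} {c : ℝ}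
    (hT : T.Nonempty) (hbdd : BddAbove (f '' T)) (h : ∀ a ∈ T, g a = f a + c) :
    sSup (g '' T) = sSup (f '' T) + c := by
  rw [Set.image_congr h, ← Set.image_image (· + c)]
  exact ((OrderIso.addRight c).map_csSup' (hT.image f) hbdd).symm

lemma le_csSup_image_of_finite {ι : Type*} [Finite ι] (F : ι → ℝ) (U : Set ι) {i : ι}
    (hi : i ∈ U) : F i ≤ sSup (F '' U) :=
  le_csSup (Set.toFinite _).bddAbove (Set.mem_image_of_mem F hi)

theorem constructed_table_in_target_set_general
    {S A : Type*} [Fintype S] [Fintype A]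
    (γ : ℝ) (hγ0 : 0 ≤ γ)
    (Qstar : S → A → ℝ)
    (πdag : S → Set A)
    (hne : ∀ s, πdag s ≠ Set.univ → (πdag s).Nonempty ∧ (πdag s)ᶜ.Nonempty)
    (Δ : ℝ)
    (hΔ3 : (1 + γ) / 2 * sSup ((fun s =>
        max (sSup (Qstar s '' (πdag s)ᶜ) - sSup (Qstar s '' πdag s)) 0) ''
        {s | πdag s ≠ Set.univ}) < Δ)
    (Q' : S → A → ℝ)
    (hQ'in : ∀ s a, πdag s ≠ Set.univ → a ∈ πdag s →
      Q' s a = Qstar s a + Δ / (1 + γ))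
    (hQ'out : ∀ s a, πdag s ≠ Set.univ → a ∉ πdag s →
      Q' s a = Qstar s a - Δ / (1 + γ)) :
    ∀ s, πdag s ≠ Set.univ →
      sSup (Q' s '' (πdag s)ᶜ) < sSup (Q' s '' πdag s) := by
  intro s hs
  obtain ⟨hin, hout⟩ := hne s hs
  have hbdd : ∀ T : Set A, BddAbove (Qstar s '' T) := fun T => (Set.toFinite _).bddAbove
  rw [csSup_image_eq_add_of_eqOn hin (hbdd _) (hQ'in s · hs),
    csSup_image_eq_add_of_eqOn hout (hbdd _) (c := -(Δ / (1 + γ))) fun a ha => by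
      rw [hQ'out s a hs ha, sub_eq_add_neg]]
  have hgap := (le_max_left _ _).trans (le_csSup_image_of_finite (fun s =>
    max (sSup (Qstar s '' (πdag s)ᶜ) - sSup (Qstar s '' πdag s)) 0) {s | πdag s ≠ Set.univ} hs)
  have hgap_lt : (1 + γ) / 2 * (sSup (Qstar s '' (πdag s)ᶜ) - sSup (Qstar s '' πdag s)) < Δ :=
    (mul_le_mul_of_nonneg_left hgap (by positivity)).trans_lt hΔ3
  have hgap_lt_two_shifts :
      sSup (Qstar s '' (πdag s)ᶜ) - sSup (Qstar s '' πdag s) < 2 * (Δ / (1 + γ)) := by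
    rw [mul_div_assoc', lt_div_iff₀ (by positivity)]
    linarith
  linarith

/-- Central construction in the proof of Theorem 2: if `Δ > Δ₃`, the table `Q'`
obtained from `Q*` by adding `Δ/(1+γ)` on desired target (state, action) pairs and
subtracting `Δ/(1+γ)` on undesired ones lies in the target Q-table set `𝒬†`. -/
theorem constructed_table_in_target_set
    {S A : Type*} [Fintype S] [Nonempty S] [Fintype A] [Nonempty A]
    (γ : ℝ) (hγ0 : 0 ≤ γ)
    (Qstar : S → A → ℝ)
    (πdag : S → Set A)
    (hSdag : {s | πdag s ≠ Set.univ}.Nonempty)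
    (hne : ∀ s, πdag s ≠ Set.univ → (πdag s).Nonempty ∧ (πdag s)ᶜ.Nonempty)
    (Δ : ℝ)
    (hΔ3 : (1 + γ) / 2 * sSup ((fun s =>
        max (sSup (Qstar s '' (πdag s)ᶜ) - sSup (Qstar s '' πdag s)) 0) ''
        {s | πdag s ≠ Set.univ}) < Δ)
    (Q' : S → A → ℝ)
    (hQ'in : ∀ s a, πdag s ≠ Set.univ → a ∈ πdag s →
      Q' s a = Qstar s a + Δ / (1 + γ))
    (hQ'out : ∀ s a, πdag s ≠ Set.univ → a ∉ πdag s →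
      Q' s a = Qstar s a - Δ / (1 + γ))
    (hQ'id : ∀ s a, πdag s = Set.univ → Q' s a = Qstar s a) :
    ∀ s, πdag s ≠ Set.univ →
      sSup (Q' s '' (πdag s)ᶜ) < sSup (Q' s '' πdag s) :=
  constructed_table_in_target_set_general γ hγ0 Qstar πdag hne Δ hΔ3 Q' hQ'in hQ'out
end

section
/- Let S and A be finite nonempty sets, P a transition kernel, R : S × A × S → ℝ, γ ∈ [0,1), and let Q* satisfy the Bellman optimality equation Q*(s,a) = ∑_{s'} P(s,a,s')(R(s,a,s') + γ max_{a'∈A} Q*(s',a')). Let Δ > 0 and let Q' : S × A → ℝ be any table with |Q'(s,a) - Q*(s,a)| ≤ Δ/(1+γ) for all (s,a) (in particular, the table of Algorithm 2 obtained from Q* by adding ±Δ/(1+γ) on target states). Define R'(s,a) = Q'(s,a) - γ ∑_{s'} P(s,a,s') max_{a'∈A} Q'(s',a') and the attack δ(s,a) = R'(s,a) - ∑_{s'} P(s,a,s') R(s,a,s'). Then |δ(s,a)| ≤ Δ for all (s,a); i.e., the non-adaptive attack policy φ^{sas}_{Δ₃} respects the magnitude constraint. -/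
/-
The Bellman equation cancels the true rewards: the attack is
`δ(s,a) = (Q' - Q*)(s,a) - γ · E_{s'}[max Q'(s',·) - max Q*(s',·)]`.
Taking a maximum is 1-Lipschitz for the sup distance and an expectation is an average, so both
terms are at most `ε = Δ/(1+γ)` in absolute value, giving `|δ| ≤ ε + γε = Δ`.
-/

open Finset

section

variable {A : Type*} [Fintype A] [Nonempty A]

theorem le_qmax (f : A → ℝ) (a : A) : f a ≤ qmax f :=
  le_sup' f (mem_univ a)

theorem qmax_le_qmax_add {f g : A → ℝ} {ε : ℝ} (h : ∀ a, f a ≤ g a + ε) :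
    qmax f ≤ qmax g + ε :=
  sup'_le _ _ fun a _ => (h a).trans (by grw [le_qmax g a])

theorem abs_qmax_sub_qmax_le {f g : A → ℝ} {ε : ℝ} (h : ∀ a, |f a - g a| ≤ ε) :
    |qmax f - qmax g| ≤ ε := by
  have hfg : ∀ a, f a ≤ g a + ε := fun a => by linarith [(abs_sub_le_iff.1 (h a)).1]
  have hgf : ∀ a, g a ≤ f a + ε := fun a => by linarith [(abs_sub_le_iff.1 (h a)).2]
  exact abs_sub_le_iff.2 ⟨by linarith [qmax_le_qmax_add hfg], by linarith [qmax_le_qmax_add hgf]⟩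

end

theorem abs_sum_mul_le_of_abs_le {ι : Type*} (s : Finset ι) {p x : ι → ℝ} {ε : ℝ}
    (hp0 : ∀ i ∈ s, 0 ≤ p i) (hp1 : ∑ i ∈ s, p i = 1) (hx : ∀ i ∈ s, |x i| ≤ ε) :
    |∑ i ∈ s, p i * x i| ≤ ε :=
  calc |∑ i ∈ s, p i * x i|
      ≤ ∑ i ∈ s, |p i * x i| := abs_sum_le_sum_abs _ _
    _ ≤ ∑ i ∈ s, p i * ε := sum_le_sum fun i hi => by
        rw [abs_mul, abs_of_nonneg (hp0 i hi)]
        exact mul_le_mul_of_nonneg_left (hx i hi) (hp0 i hi)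
    _ = ε := by rw [← sum_mul, hp1, one_mul]

theorem nonadaptive_attack_magnitude_general
    {S A : Type*} [Fintype S] [Fintype A] [Nonempty A]
    (P : S → A → S → ℝ) (hP0 : ∀ s a s', 0 ≤ P s a s')
    (hP1 : ∀ s a, ∑ s', P s a s' = 1)
    (R : S → A → S → ℝ) (γ : ℝ) (hγ0 : 0 ≤ γ)
    (Qstar : S → A → ℝ)
    (hBellman : ∀ s a, Qstar s a =
      ∑ s', P s a s' * (R s a s' + γ * qmax (Qstar s')))
    (Δ : ℝ)
    (Q' : S → A → ℝ) (hQ' : ∀ s a, |Q' s a - Qstar s a| ≤ Δ / (1 + γ))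
    (R' : S → A → ℝ)
    (hR' : ∀ s a, R' s a = Q' s a - γ * ∑ s', P s a s' * qmax (Q' s'))
    (δ : S → A → ℝ)
    (hδ : ∀ s a, δ s a = R' s a - ∑ s', P s a s' * R s a s') :
    ∀ s a, |δ s a| ≤ Δ := by
  intro s a
  have hδ_eq : δ s a = (Q' s a - Qstar s a)
      - γ * ∑ s', P s a s' * (qmax (Q' s') - qmax (Qstar s')) := by
    simp only [hδ, hR', hBellman, mul_add, mul_sub, sum_add_distrib, sum_sub_distrib, mul_sum]
    ring_nf
  have hnext : |∑ s', P s a s' * (qmax (Q' s') - qmax (Qstar s'))| ≤ Δ / (1 + γ) :=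
    abs_sum_mul_le_of_abs_le _ (fun s' _ => hP0 s a s') (hP1 s a)
      fun s' _ => abs_qmax_sub_qmax_le (hQ' s')
  calc |δ s a|
      ≤ |Q' s a - Qstar s a| + γ * |∑ s', P s a s' * (qmax (Q' s') - qmax (Qstar s'))| := by
        rw [hδ_eq]
        exact (abs_sub _ _).trans_eq (by rw [abs_mul, abs_of_nonneg hγ0])
    _ ≤ Δ / (1 + γ) + γ * (Δ / (1 + γ)) := by grw [hQ' s a, hnext]
    _ = Δ := by field_simp

/-- Validity of the non-adaptive attack `φ^{sas}_{Δ₃}`: if `Q'` is within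
`Δ/(1+γ)` of `Q*` in every entry, then the induced attack
`δ(s,a) = R'(s,a) - E_{s'∼P(·|s,a)}[R(s,a,s')]` has magnitude at most `Δ`. -/
theorem nonadaptive_attack_magnitude
    {S A : Type*} [Fintype S] [Nonempty S] [Fintype A] [Nonempty A]
    (P : S → A → S → ℝ) (hP0 : ∀ s a s', 0 ≤ P s a s')
    (hP1 : ∀ s a, ∑ s', P s a s' = 1)
    (R : S → A → S → ℝ) (γ : ℝ) (hγ0 : 0 ≤ γ) (hγ1 : γ < 1)
    (Qstar : S → A → ℝ)
    (hBellman : ∀ s a, Qstar s a =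
      ∑ s', P s a s' * (R s a s' + γ * qmax (Qstar s')))
    (Δ : ℝ) (hΔ : 0 < Δ)
    (Q' : S → A → ℝ) (hQ' : ∀ s a, |Q' s a - Qstar s a| ≤ Δ / (1 + γ))
    (R' : S → A → ℝ)
    (hR' : ∀ s a, R' s a = Q' s a - γ * ∑ s', P s a s' * qmax (Q' s'))
    (δ : S → A → ℝ)
    (hδ : ∀ s a, δ s a = R' s a - ∑ s', P s a s' * R s a s') :
    ∀ s a, |δ s a| ≤ Δ :=
  nonadaptive_attack_magnitude_general P hP0 hP1 R γ hγ0 Qstar hBellman Δ Q' hQ' R' hR' δ hδ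
end

section
/- Let m ≥ 2 be a natural number, ε ∈ [0,1), and let V : ℕ → ℝ satisfy V(1) = 0 and, for every t with 2 ≤ t ≤ m, V(t) = 1 + (1-ε)·V(t-1) + ε·[((t-1)/m)·V(t-1) + (1/m)·V(1) + ((m-t)/m)·V(t)]. Then for every t with 1 ≤ t ≤ m, 0 ≤ V(t) ≤ (t-1)/(1-ε); in particular V(t) ≤ m/(1-ε) for all 1 ≤ t ≤ m. -/
/-!
Clearing denominators, the recurrence reads
`(m - ε (m - t)) V(t) = m + ((1 - ε) m + ε (t - 1)) V(t - 1)`, with both coefficients positive.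
So nonnegativity propagates, and feeding `V(t - 1) ≤ (t - 2)/(1 - ε)` into it leaves a slack of
exactly `2 ε (t - 1) ≥ 0` against `V(t) ≤ (t - 1)/(1 - ε)`.
-/

section VisitStep

variable {m s ε x y : ℝ}

lemma visit_recurrence_clear (hm : m ≠ 0)
    (hy : y = 1 + (1 - ε) * x + ε * (s / m * x + 1 / m * 0 + (m - (s + 1)) / m * y)) :
    (m - ε * (m - (s + 1))) * y = m + ((1 - ε) * m + ε * s) * x := by
  field_simp at hy
  linear_combination hy

lemma visit_step_bounds (hε0 : 0 ≤ ε) (hε1 : ε < 1) (hs : 1 ≤ s) (hsm : s + 1 ≤ m)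
    (hx0 : 0 ≤ x) (hx : x ≤ (s - 1) / (1 - ε))
    (hy : y = 1 + (1 - ε) * x + ε * (s / m * x + 1 / m * 0 + (m - (s + 1)) / m * y)) :
    0 ≤ y ∧ y ≤ s / (1 - ε) := by
  have h1ε : 0 < 1 - ε := by linarith
  have hclear := visit_recurrence_clear (by linarith) hy
  have hd : 0 < m - ε * (m - (s + 1)) := by nlinarith
  have hc : 0 ≤ (1 - ε) * m + ε * s := by nlinarith
  rw [le_div_iff₀ h1ε] at hx ⊢
  constructor
  · nlinarith [mul_nonneg hc hx0]
  · nlinarith [mul_le_mul_of_nonneg_left hx hc]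

end VisitStep

theorem faa_visit_count_bound_general
    (m : ℕ) (ε : ℝ) (hε0 : 0 ≤ ε) (hε1 : ε < 1)
    (V : ℕ → ℝ) (hV1 : V 1 = 0)
    (hrec : ∀ t : ℕ, 2 ≤ t → t ≤ m →
      V t = 1 + (1 - ε) * V (t - 1) +
        ε * (((t : ℝ) - 1) / m * V (t - 1) + 1 / m * V 1 +
          ((m : ℝ) - t) / m * V t)) :
    ∀ t : ℕ, 1 ≤ t → t ≤ m →
      0 ≤ V t ∧ V t ≤ ((t : ℝ) - 1) / (1 - ε) ∧ V t ≤ (m : ℝ) / (1 - ε) := by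
  have key : ∀ t : ℕ, 1 ≤ t → t ≤ m → 0 ≤ V t ∧ V t ≤ ((t : ℝ) - 1) / (1 - ε) := by
    refine Nat.le_induction (fun _ => by simp [hV1]) fun n hn ih hnm => ?_
    obtain ⟨hx0, hx⟩ := ih (by omega)
    have hy := hrec (n + 1) (by omega) hnm
    rw [Nat.add_sub_cancel, hV1, Nat.cast_succ, add_sub_cancel_right] at hy
    rw [Nat.cast_succ, add_sub_cancel_right]
    exact visit_step_bounds hε0 hε1 (by exact_mod_cast hn) (by exact_mod_cast hnm) hx0 hx hy
  intro t ht htm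
  obtain ⟨h0, h1⟩ := key t ht htm
  have htm' : (t : ℝ) - 1 ≤ m := by linarith [(Nat.cast_le.mpr htm : (t : ℝ) ≤ m)]
  exact ⟨h0, h1, h1.trans (by gcongr)⟩

/-- Lemma 2 of the paper: the expected number of visits needed by the greedy
attack to enforce a target action set is at most `(t-1)/(1-ε) ≤ m/(1-ε)`. -/
theorem faa_visit_count_bound
    (m : ℕ) (hm : 2 ≤ m) (ε : ℝ) (hε0 : 0 ≤ ε) (hε1 : ε < 1)
    (V : ℕ → ℝ) (hV1 : V 1 = 0)
    (hrec : ∀ t : ℕ, 2 ≤ t → t ≤ m →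
      V t = 1 + (1 - ε) * V (t - 1) +
        ε * (((t : ℝ) - 1) / m * V (t - 1) + 1 / m * V 1 +
          ((m : ℝ) - t) / m * V t)) :
    ∀ t : ℕ, 1 ≤ t → t ≤ m →
      0 ≤ V t ∧ V t ≤ ((t : ℝ) - 1) / (1 - ε) ∧ V t ≤ (m : ℝ) / (1 - ε) :=
  faa_visit_count_bound_general m ε hε0 hε1 V hV1 hrec
end
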